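/- For every natural number n divisible by 3, the single strip Sₙ is equivalent to the zero game modulo the universe of Partizan Kayles positions: o⁻(Sₙ + X) = o⁻(X) for all Partizan Kayles positions X. -/

import Mathlib

/-- Add a strip of length `k` to a position (strips of length 0 are discarded). -/
def addStrip (m : Multiset ℕ) (k : ℕ) : Multiset ℕ := if k = 0 then m else k ::ₘ m

/-- Left removes one square from a strip of length `n ≥ 1`, leaving strips `i` and `n-1-i`. -/
def LeftMove (G G' : Multiset ℕ) : Prop :=
  ∃ n ∈ G, ∃ i, i + 1 ≤ n ∧ G' = addStrip (addStrip (G.erase n) i) (n - 1 - i)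

/-- Right removes two adjacent squares from a strip of length `n ≥ 2`, leaving `i` and `n-2-i`. -/
def RightMove (G G' : Multiset ℕ) : Prop :=
  ∃ n ∈ G, ∃ i, i + 2 ≤ n ∧ G' = addStrip (addStrip (G.erase n) i) (n - 2 - i)

mutual
  /-- Misère play: Left, to move, wins (a player unable to move wins). -/
  inductive LeftWinsMover : Multiset ℕ → Prop
    | cannot (G : Multiset ℕ) : (¬ ∃ G', LeftMove G G') → LeftWinsMover G
    | move (G G' : Multiset ℕ) : LeftMove G G' → LeftWinsWaiter G' → LeftWinsMover G
  /-- Misère play: Left wins with Right to move. -/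
  inductive LeftWinsWaiter : Multiset ℕ → Prop
    | intro (G : Multiset ℕ) : (∃ G', RightMove G G') →
        (∀ G', RightMove G G' → LeftWinsMover G') → LeftWinsWaiter G
end

inductive Outcome | L | N | P | R
  deriving DecidableEq

open Classical in
/-- The misère outcome `o⁻(G)`. -/
noncomputable def outcome (G : Multiset ℕ) : Outcome :=
  if LeftWinsMover G then (if LeftWinsWaiter G then Outcome.L else Outcome.N)
  else (if LeftWinsWaiter G then Outcome.P else Outcome.R)

/-- The partial order on outcomes: `L` greatest, `R` least, `N` and `P` incomparable. -/
def Outcome.le (a b : Outcome) : Prop := a = b ∨ a = Outcome.R ∨ b = Outcome.L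

/-- `pos k j` is the position `kS₁ + jS₂`. -/
def pos (k j : ℕ) : Multiset ℕ := Multiset.replicate k 1 + Multiset.replicate j 2

/-!
Give a strip of length `x` the weight `-1`, `0` or `+1` according as `x ≡ 1`, `0` or `2` (mod 3),
and call the total weight of a position its balance. Since the weight is `≡ -x` (mod 3) and lies
in `{-1, 0, 1}`, a Left move changes the balance by `+1` or `-2` and a Right move by `-1` or `+2`;
moreover Left can always gain `+1` from a strip of length `≢ 2`, and Right can always lose `-1` from
any strip of length `≥ 2`. It follows that Left, moving first, wins exactly when the balance lies
in `3ℕ`, and Left, moving second, wins exactly when it lies in `3ℕ + 1`. A strip whose length is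
a multiple of 3 has weight 0, so adding it changes neither.
-/

def weight (x : ℕ) : ℤ := 1 - ((x : ℤ) + 1) % 3

def balance (G : Multiset ℕ) : ℤ := (G.map weight).sum

theorem balance_addStrip (G : Multiset ℕ) (k : ℕ) :
    balance (addStrip G k) = weight k + balance G := by
  unfold addStrip
  split_ifs with hk
  · simp [hk, weight]
  · simp [balance]

theorem sum_addStrip (G : Multiset ℕ) (k : ℕ) : (addStrip G k).sum = k + G.sum := by
  unfold addStrip
  split_ifs with hk <;> simp [hk]

section Moves

variable {G G' : Multiset ℕ} {n : ℕ}

theorem balance_split (hn : n ∈ G) (i j : ℕ) :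
    balance (addStrip (addStrip (G.erase n) i) j) = balance G - weight n + weight i + weight j := by
  rw [balance_addStrip, balance_addStrip]
  conv_rhs => rw [← Multiset.cons_erase hn]
  simp only [balance, Multiset.map_cons, Multiset.sum_cons]
  ring

theorem sum_split (hn : n ∈ G) (i j : ℕ) :
    (addStrip (addStrip (G.erase n) i) j).sum + n = G.sum + i + j := by
  conv_rhs => rw [← Multiset.cons_erase hn]
  rw [sum_addStrip, sum_addStrip, Multiset.sum_cons]
  ring

theorem LeftMove.sum_lt (h : LeftMove G G') : G'.sum < G.sum := by
  obtain ⟨n, hn, i, hi, rfl⟩ := h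
  have := sum_split hn i (n - 1 - i)
  omega

theorem RightMove.sum_lt (h : RightMove G G') : G'.sum < G.sum := by
  obtain ⟨n, hn, i, hi, rfl⟩ := h
  have := sum_split hn i (n - 2 - i)
  omega

theorem LeftMove.balance_eq (h : LeftMove G G') :
    balance G' = balance G + 1 ∨ balance G' = balance G - 2 := by
  obtain ⟨n, hn, i, hi, rfl⟩ := h
  rw [balance_split hn]
  simp only [weight]
  omega

theorem RightMove.balance_eq (h : RightMove G G') :
    balance G' = balance G - 1 ∨ balance G' = balance G + 2 := by
  obtain ⟨n, hn, i, hi, rfl⟩ := h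
  rw [balance_split hn]
  simp only [weight]
  omega

theorem exists_leftMove_balance_eq_add_one (hn : n ∈ G) (h1 : 1 ≤ n) (h2 : n % 3 ≠ 2) :
    ∃ G', LeftMove G G' ∧ balance G' = balance G + 1 := by
  refine ⟨_, ⟨n, hn, 0, h1, rfl⟩, ?_⟩
  rw [balance_split hn]
  simp only [weight]
  omega

theorem exists_leftMove_balance_eq_sub_two (hn : n ∈ G) (h2 : n % 3 = 2) :
    ∃ G', LeftMove G G' ∧ balance G' = balance G - 2 := by
  refine ⟨_, ⟨n, hn, 0, by omega, rfl⟩, ?_⟩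
  rw [balance_split hn]
  simp only [weight]
  omega

/-- Right splits a single square off a strip of length `≡ 1`, and otherwise removes an end pair. -/
theorem exists_rightMove_balance_eq_sub_one (hn : n ∈ G) (h2 : 2 ≤ n) :
    ∃ G', RightMove G G' ∧ balance G' = balance G - 1 := by
  set i := if n % 3 = 1 then 1 else 0 with hi
  refine ⟨_, ⟨n, hn, i, by split_ifs at hi <;> omega, rfl⟩, ?_⟩
  rw [balance_split hn]
  simp only [weight]
  split_ifs at hi <;> omega

theorem balance_eq_zero_of_not_exists_leftMove (h : ¬∃ G', LeftMove G G') : balance G = 0 := by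
  refine Multiset.sum_eq_zero fun w hw => ?_
  obtain ⟨x, hx, rfl⟩ := Multiset.mem_map.1 hw
  by_contra hne
  have hx0 : x ≠ 0 := by rintro rfl; simp [weight] at hne
  exact h ⟨_, x, hx, 0, by omega, rfl⟩

theorem exists_mem_mod_three_eq_two_of_balance_pos (h : 0 < balance G) : ∃ x ∈ G, x % 3 = 2 := by
  by_contra! hG
  have hle : ∀ w ∈ G.map weight, w ≤ 0 := by
    refine Multiset.forall_mem_map_iff.2 fun x hx => ?_
    have := hG x hx
    simp only [weight]
    omega
  have := Multiset.sum_le_card_nsmul _ 0 hle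
  simp only [smul_zero] at this
  exact this.not_gt h

/-- Left's winning move: if every nonzero strip has length `≡ 2`, the balance counts them. -/
theorem exists_leftMove_of_balance (hmove : ∃ G', LeftMove G G')
    (h : 0 ≤ balance G ∧ 3 ∣ balance G) :
    ∃ G', LeftMove G G' ∧ 0 ≤ balance G' - 1 ∧ 3 ∣ balance G' - 1 := by
  by_cases hgain : ∃ n ∈ G, 1 ≤ n ∧ n % 3 ≠ 2
  · obtain ⟨n, hn, h1, h2⟩ := hgain
    obtain ⟨G', hG', hb⟩ := exists_leftMove_balance_eq_add_one hn h1 h2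
    exact ⟨G', hG', by omega, by omega⟩
  · push Not at hgain
    obtain ⟨_, n, hn, i, hi, -⟩ := hmove
    have h2 := hgain n hn (by omega)
    have hnonneg : ∀ w ∈ G.map weight, 0 ≤ w := by
      refine Multiset.forall_mem_map_iff.2 fun x hx => ?_
      by_cases hx0 : x = 0
      · simp [hx0, weight]
      · have := hgain x hx (by omega)
        simp only [weight]
        omega
    have hle : weight n ≤ balance G :=
      Multiset.single_le_sum hnonneg _ (Multiset.mem_map_of_mem weight hn)
    obtain ⟨G', hG', hb⟩ := exists_leftMove_balance_eq_sub_two hn h2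
    simp only [weight] at hle
    exact ⟨G', hG', by omega, by omega⟩

end Moves

mutual

theorem balance_of_leftWinsMover {G : Multiset ℕ} : LeftWinsMover G → 0 ≤ balance G ∧ 3 ∣ balance G
  | .cannot _ h => by simp [balance_eq_zero_of_not_exists_leftMove h]
  | .move _ _ hmove hwin => by
    have := balance_of_leftWinsWaiter hwin
    rcases hmove.balance_eq with hb | hb <;> omega

theorem balance_of_leftWinsWaiter {G : Multiset ℕ} :
    LeftWinsWaiter G → 0 ≤ balance G - 1 ∧ 3 ∣ balance G - 1
  | .intro _ ⟨_, _, hn, _, hi, _⟩ hall => by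
    obtain ⟨G', hG', hb⟩ := exists_rightMove_balance_eq_sub_one hn (by omega)
    have := balance_of_leftWinsMover (hall G' hG')
    omega

end

mutual

theorem leftWinsMover_of_balance (G : Multiset ℕ) (h : 0 ≤ balance G ∧ 3 ∣ balance G) :
    LeftWinsMover G := by
  by_cases hmove : ∃ G', LeftMove G G'
  · obtain ⟨G', hG', hb⟩ := exists_leftMove_of_balance hmove h
    exact .move G G' hG' (leftWinsWaiter_of_balance G' hb)
  · exact .cannot G hmove
termination_by G.sum
decreasing_by exact hG'.sum_lt

theorem leftWinsWaiter_of_balance (G : Multiset ℕ) (h : 0 ≤ balance G - 1 ∧ 3 ∣ balance G - 1) :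
    LeftWinsWaiter G := by
  obtain ⟨n, hn, h2⟩ := exists_mem_mod_three_eq_two_of_balance_pos (show 0 < balance G by omega)
  refine .intro G ⟨_, n, hn, 0, by omega, rfl⟩ fun G' hG' => ?_
  exact leftWinsMover_of_balance G' (by rcases hG'.balance_eq with hb | hb <;> omega)
termination_by G.sum
decreasing_by exact hG'.sum_lt

end

theorem leftWinsMover_iff (G : Multiset ℕ) :
    LeftWinsMover G ↔ 0 ≤ balance G ∧ 3 ∣ balance G :=
  ⟨balance_of_leftWinsMover, leftWinsMover_of_balance G⟩

theorem leftWinsWaiter_iff (G : Multiset ℕ) :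
    LeftWinsWaiter G ↔ 0 ≤ balance G - 1 ∧ 3 ∣ balance G - 1 :=
  ⟨balance_of_leftWinsWaiter, leftWinsWaiter_of_balance G⟩

theorem outcome_eq_of_balance_eq {G H : Multiset ℕ} (h : balance G = balance H) :
    outcome G = outcome H := by
  simp only [outcome, leftWinsMover_iff, leftWinsWaiter_iff, h]

theorem kayles_strip_multiple_of_three_equiv_zero (n : ℕ) (h : n % 3 = 0) :
    ∀ X : Multiset ℕ, 0 ∉ X → outcome (addStrip X n) = outcome X := by
  intro X _
  refine outcome_eq_of_balance_eq ?_
  rw [balance_addStrip, add_eq_right]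
  simp only [weight]
  omega
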